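/- Let n, N be positive integers, let α^1, …, α^n, β be Hermitian N×N complex matrices with (α^j)² = β² = I, α^j α^k + α^k α^j = 0 for j ≠ k, and α^j β + β α^j = 0, let m > 0, ω ∈ ℝ, f ∈ C¹(ℝ), and let φ: ℝ^n → ℂ^N be a Schwartz solution of the stationary Soler equation ω φ = −i Σ_{j=1}^n α^j ∂_j φ + m β φ − f(⟨φ, βφ⟩) βφ. Then the total current vanishes: ∫_{ℝ^n} ⟨φ(x), α^k φ(x)⟩ dx = 0 for every 1 ≤ k ≤ n. -/

import Mathlib

open Matrix MeasureTheory

/-- The Hermitian inner product on `ℂ^N`, conjugate-linear in the first argument. -/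
noncomputable def cInner {N : ℕ} (v w : Fin N → ℂ) : ℂ := ∑ i, (starRingEnd ℂ) (v i) * w i

/-- The charge `Q(φ) = ∫ |φ(x)|² dx`. -/
noncomputable def Qfun {n N : ℕ} (φ : (Fin n → ℝ) → (Fin N → ℂ)) : ℝ :=
  ∫ x, ∑ i, Complex.normSq (φ x i)

/-- The kinetic functional `K(φ) = ∫ ⟨φ(x), −i Σ_j α^j ∂_j φ(x)⟩ dx`. -/
noncomputable def Kfun {n N : ℕ} (α : Fin n → Matrix (Fin N) (Fin N) ℂ)
    (φ : (Fin n → ℝ) → (Fin N → ℂ)) : ℂ :=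
  ∫ x, cInner (φ x) ((-Complex.I) • ∑ j, (α j).mulVec (fderiv ℝ φ x (Pi.single j 1)))

/-- The mass term `M(φ) = m ∫ ⟨φ(x), β φ(x)⟩ dx`. -/
noncomputable def Mfun {n N : ℕ} (β : Matrix (Fin N) (Fin N) ℂ) (m : ℝ)
    (φ : (Fin n → ℝ) → (Fin N → ℂ)) : ℂ :=
  (m : ℂ) * ∫ x, cInner (φ x) (β.mulVec (φ x))

/-- The potential term of the Soler model, `V(φ) = −∫ F(⟨φ(x), βφ(x)⟩) dx`. -/
noncomputable def Vsol {n N : ℕ} (β : Matrix (Fin N) (Fin N) ℂ) (F : ℝ → ℝ)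
    (φ : (Fin n → ℝ) → (Fin N → ℂ)) : ℝ :=
  - ∫ x, F ((cInner (φ x) (β.mulVec (φ x))).re)

/-- The energy of the Soler model, `E(φ) = K(φ) + M(φ) + V(φ)`. -/
noncomputable def Esol {n N : ℕ} (α : Fin n → Matrix (Fin N) (Fin N) ℂ)
    (β : Matrix (Fin N) (Fin N) ℂ) (m : ℝ) (F : ℝ → ℝ)
    (φ : (Fin n → ℝ) → (Fin N → ℂ)) : ℂ :=
  Kfun α φ + Mfun β m φ + (Vsol β F φ : ℝ)

/-- The stationary Soler equation
`ω φ = −i Σ_j α^j ∂_j φ + m β φ − f(⟨φ, βφ⟩) βφ` (pointwise in `x`). -/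
def IsSolerSolution {n N : ℕ} (α : Fin n → Matrix (Fin N) (Fin N) ℂ)
    (β : Matrix (Fin N) (Fin N) ℂ) (m ω : ℝ) (f : ℝ → ℝ)
    (φ : (Fin n → ℝ) → (Fin N → ℂ)) : Prop :=
  ∀ x, (ω : ℂ) • φ x =
    (-Complex.I) • (∑ j, (α j).mulVec (fderiv ℝ φ x (Pi.single j 1)))
      + (m : ℂ) • β.mulVec (φ x)
      - ((f ((cInner (φ x) (β.mulVec (φ x))).re) : ℝ) : ℂ) • β.mulVec (φ x)


section Helpers

open Metric


lemma cInner_conj {N : ℕ} (v w : Fin N → ℂ) :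
    (starRingEnd ℂ) (cInner v w) = cInner w v := by
  simp only [cInner, map_sum]
  exact Finset.sum_congr rfl fun i _ => by
    rw [_root_.map_mul, Complex.conj_conj]; ring

lemma cInner_herm {N : ℕ} {A : Matrix (Fin N) (Fin N) ℂ} (hA : A.IsHermitian)
    (v w : Fin N → ℂ) : cInner v (A.mulVec w) = cInner (A.mulVec v) w := by
  simp only [cInner, Matrix.mulVec, dotProduct, Finset.mul_sum, map_sum,
    Finset.sum_mul]
  rw [Finset.sum_comm]
  refine Finset.sum_congr rfl fun i _ => Finset.sum_congr rfl fun l _ => ?_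
  rw [_root_.map_mul, show (starRingEnd ℂ) (A i l) = A l i from hA.apply l i]
  ring

lemma cInner_add_right {N : ℕ} (v w u : Fin N → ℂ) :
    cInner v (w + u) = cInner v w + cInner v u := by
  simp [cInner, mul_add, Finset.sum_add_distrib]

lemma cInner_sub_right {N : ℕ} (v w u : Fin N → ℂ) :
    cInner v (w - u) = cInner v w - cInner v u := by
  simp [cInner, mul_sub, Finset.sum_sub_distrib]

lemma cInner_smul_right {N : ℕ} (c : ℂ) (v w : Fin N → ℂ) :
    cInner v (c • w) = c * cInner v w := by
  simp only [cInner, Pi.smul_apply, smul_eq_mul, Finset.mul_sum]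
  exact Finset.sum_congr rfl fun i _ => by ring

lemma cInner_add_left {N : ℕ} (v w u : Fin N → ℂ) :
    cInner (v + w) u = cInner v u + cInner w u := by
  simp [cInner, add_mul, Finset.sum_add_distrib]

lemma cInner_rsmul_left {N : ℕ} (r : ℝ) (v w : Fin N → ℂ) :
    cInner (r • v) w = r • cInner v w := by
  simp only [cInner, Pi.smul_apply, Complex.real_smul, _root_.map_mul, Complex.conj_ofReal,
    Finset.smul_sum, smul_eq_mul]
  exact Finset.sum_congr rfl fun i _ => by ring

lemma cInner_rsmul_right {N : ℕ} (r : ℝ) (v w : Fin N → ℂ) :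
    cInner v (r • w) = r • cInner v w := by
  simp only [cInner, Pi.smul_apply, Complex.real_smul, Finset.smul_sum, smul_eq_mul]
  exact Finset.sum_congr rfl fun i _ => by ring

/-- The real-bilinear form `(v, w) ↦ cInner v (M *ᵥ w)` as a continuous bilinear map. -/
noncomputable def bilM {N : ℕ} (M : Matrix (Fin N) (Fin N) ℂ) :
    (Fin N → ℂ) →L[ℝ] (Fin N → ℂ) →L[ℝ] ℂ :=
  LinearMap.toContinuousLinearMap
  { toFun := fun v => LinearMap.toContinuousLinearMap
      { toFun := fun w => cInner v (M.mulVec w)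
        map_add' := fun w u => by
          show cInner v (M.mulVec (w + u)) = cInner v (M.mulVec w) + cInner v (M.mulVec u)
          rw [Matrix.mulVec_add, cInner_add_right]
        map_smul' := fun r w => by
          show cInner v (M.mulVec (r • w)) = r • cInner v (M.mulVec w)
          rw [Matrix.mulVec_smul, cInner_rsmul_right] }
    map_add' := fun v v' => by
      ext w
      show cInner (v + v') (M.mulVec w) = cInner v (M.mulVec w) + cInner v' (M.mulVec w)
      rw [cInner_add_left]
    map_smul' := fun r v => by
      ext w
      show cInner (r • v) (M.mulVec w) = r • cInner v (M.mulVec w)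
      rw [cInner_rsmul_left] }

@[simp] lemma bilM_apply {N : ℕ} (M : Matrix (Fin N) (Fin N) ℂ) (v w : Fin N → ℂ) :
    bilM M v w = cInner v (M.mulVec w) := rfl

lemma cInner_sum_right {N : ℕ} {ι : Type*} (s : Finset ι) (v : Fin N → ℂ) (w : ι → Fin N → ℂ) :
    cInner v (∑ j ∈ s, w j) = ∑ j ∈ s, cInner v (w j) := by
  simp only [cInner, Finset.sum_apply, Finset.mul_sum]
  rw [Finset.sum_comm]


lemma schwartz_hasTemperateGrowth {E F : Type*} [NormedAddCommGroup E] [NormedSpace ℝ E]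
    [NormedAddCommGroup F] [NormedSpace ℝ F] (f : SchwartzMap E F) :
    Function.HasTemperateGrowth (⇑f) := by
  refine ⟨f.smooth', fun N => ?_⟩
  obtain ⟨C, -, hC⟩ := f.decay 0 N
  exact ⟨0, C, fun x => by simpa using hC x⟩

lemma integral_pderiv_schwartz_eq_zero {n : ℕ} (h : SchwartzMap (Fin n → ℝ) ℂ)
    (v : Fin n → ℝ) : ∫ x, fderiv ℝ (⇑h) x v = 0 := by
  set g : SchwartzMap (Fin n → ℝ) ℂ := (LineDeriv.lineDerivOp v h : SchwartzMap (Fin n → ℝ) ℂ) with hgdef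
  have hg : ∀ x, g x = fderiv ℝ (⇑h) x v := fun x => SchwartzMap.lineDerivOp_apply_eq_fderiv v h x
  -- decay bound for g
  obtain ⟨C, hC⟩ : ∃ C : ℝ, ∀ y, (1 + ‖y‖) ^ (n + 1) * ‖g y‖ ≤ C := by
    refine ⟨2 ^ (n+1) * (Finset.Iic ((n+1 : ℕ), (0:ℕ))).sup
      (fun m => SchwartzMap.seminorm ℝ m.1 m.2) g, fun y => ?_⟩
    have := SchwartzMap.one_add_le_sup_seminorm_apply (𝕜 := ℝ) (m := ((n+1 : ℕ), (0:ℕ)))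
      (k := n+1) (n := 0) le_rfl le_rfl g y
    simpa [norm_iteratedFDeriv_zero] using this
  have hC0 : 0 ≤ C := le_trans (by positivity) (hC 0)
  set bound : (Fin n → ℝ) → ℝ :=
    fun x => (C * (1 + ‖v‖) ^ (n + 1)) * ((1 + ‖x‖) ^ ((n:ℝ) + 1))⁻¹ with hbdef
  have key := hasDerivAt_integral_of_dominated_loc_of_deriv_le
    (F := fun (t : ℝ) (x : Fin n → ℝ) => h (x + t • v))
    (F' := fun (t : ℝ) (x : Fin n → ℝ) => g (x + t • v))
    (x₀ := (0:ℝ)) (s := Metric.ball 0 1) (bound := bound) (μ := volume) (Metric.ball_mem_nhds _ one_pos)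
    (Filter.Eventually.of_forall fun t =>
      (h.continuous.comp (continuous_id.add continuous_const)).aestronglyMeasurable)
    (by simpa using h.integrable (μ := volume))
    ((g.continuous.comp (continuous_id.add continuous_const)).aestronglyMeasurable)
    ?_ ?_ ?_
  · -- conclude
    have hconst : (fun t : ℝ => ∫ x, h (x + t • v)) = fun _ => ∫ x, h x := by
      funext t
      exact integral_add_right_eq_self (fun x => h x) (t • v)
    have h2 := key.2
    rw [hconst] at h2
    have h3 := h2.unique (hasDerivAt_const 0 _)
    have : ∫ x, g (x + (0:ℝ) • v) = ∫ x, fderiv ℝ (⇑h) x v := by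
      simp [hg]
    rw [this] at h3
    exact h3
  · -- bound
    refine Filter.Eventually.of_forall fun x => fun t ht => ?_
    have hV : (0:ℝ) < 1 + ‖v‖ := by positivity
    have hB : (0:ℝ) < 1 + ‖x‖ := by positivity
    have hA : (0:ℝ) < 1 + ‖x + t • v‖ := by positivity
    have ht1 : |t| ≤ 1 := le_of_lt (by simpa [Real.dist_eq] using mem_ball_iff_norm.mp ht)
    have hxle : ‖x‖ ≤ ‖x + t • v‖ + ‖v‖ := by
      have : ‖x‖ ≤ ‖x + t • v‖ + ‖t • v‖ := by
        calc ‖x‖ = ‖(x + t • v) - t • v‖ := by ring_nf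
        _ ≤ ‖x + t • v‖ + ‖t • v‖ := norm_sub_le _ _
      have : ‖t • v‖ ≤ ‖v‖ := by
        rw [norm_smul]
        calc ‖t‖ * ‖v‖ ≤ 1 * ‖v‖ := by
              apply mul_le_mul_of_nonneg_right _ (norm_nonneg v)
              simpa [Real.norm_eq_abs] using ht1
        _ = ‖v‖ := one_mul _
      linarith
    have h1 : 1 + ‖x‖ ≤ (1 + ‖x + t • v‖) * (1 + ‖v‖) := by nlinarith [norm_nonneg (x + t • v), norm_nonneg v]
    have h1p : (1 + ‖x‖) ^ (n+1) ≤ (1 + ‖x + t • v‖) ^ (n+1) * (1 + ‖v‖) ^ (n+1) := by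
      rw [← mul_pow]; exact pow_le_pow_left₀ (by positivity) h1 _
    have h2 : ‖g (x + t • v)‖ * (1 + ‖x‖) ^ (n+1) ≤ C * (1 + ‖v‖) ^ (n+1) := by
      calc ‖g (x + t • v)‖ * (1 + ‖x‖) ^ (n+1)
          ≤ ‖g (x + t • v)‖ * ((1 + ‖x + t • v‖) ^ (n+1) * (1 + ‖v‖) ^ (n+1)) := by
            exact mul_le_mul_of_nonneg_left h1p (norm_nonneg _)
        _ = ((1 + ‖x + t • v‖) ^ (n+1) * ‖g (x + t • v)‖) * (1 + ‖v‖) ^ (n+1) := by ring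
        _ ≤ C * (1 + ‖v‖) ^ (n+1) :=
            mul_le_mul_of_nonneg_right (hC _) (by positivity)
    have hpow : ((1 + ‖x‖) ^ ((n:ℝ) + 1)) = (1 + ‖x‖) ^ (n+1) := by
      rw [show ((n:ℝ) + 1) = ((n+1 : ℕ) : ℝ) by push_cast; ring, Real.rpow_natCast]
    show ‖g (x + t • v)‖ ≤ C * (1 + ‖v‖) ^ (n + 1) * ((1 + ‖x‖) ^ ((n:ℝ) + 1))⁻¹
    rw [hpow, ← div_eq_mul_inv, le_div_iff₀ (by positivity)]
    exact h2
  · -- integrability of bound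
    apply Integrable.const_mul
    have : ((Module.finrank ℝ (Fin n → ℝ) : ℝ)) < (n:ℝ) + 1 := by
      simp [Module.finrank_fin_fun]
    have hi := integrable_one_add_norm (E := Fin n → ℝ) (μ := volume) (r := (n:ℝ)+1) this
    refine hi.congr ?_
    refine Filter.Eventually.of_forall fun x => ?_
    show (1 + ‖x‖) ^ (-((n:ℝ) + 1)) = ((1 + ‖x‖) ^ ((n:ℝ) + 1))⁻¹
    rw [Real.rpow_neg (by positivity : (0:ℝ) ≤ 1 + ‖x‖)]
  · -- differentiability
    refine Filter.Eventually.of_forall fun x => fun t _ => ?_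
    have hline : HasDerivAt (fun s : ℝ => x + s • v) v t := by
      simpa using ((hasDerivAt_id t).smul_const v).const_add x
    have := (h.differentiableAt.hasFDerivAt (x := x + t • v)).comp_hasDerivAt t hline
    simpa [hg, Function.comp_def] using this

end Helpers

set_option maxHeartbeats 1000000 in
/-- for a Schwartz solution `φ` of the stationary Soler equation (with
anticommuting Hermitian Dirac matrices), the total current vanishes:
`∫ ⟨φ(x), α^k φ(x)⟩ dx = 0` for every `k`. -/
theorem stmt_12 {n N : ℕ} (hn : 0 < n) (hN : 0 < N)
    (α : Fin n → Matrix (Fin N) (Fin N) ℂ) (β : Matrix (Fin N) (Fin N) ℂ)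
    (hα : ∀ j, (α j).IsHermitian) (hβ : β.IsHermitian)
    (hα2 : ∀ j, α j * α j = 1) (hβ2 : β * β = 1)
    (hanti : ∀ j k, j ≠ k → α j * α k + α k * α j = 0)
    (hαβ : ∀ j, α j * β + β * α j = 0)
    (m : ℝ) (hm : 0 < m) (ω : ℝ) (f : ℝ → ℝ) (hf : ContDiff ℝ 1 f)
    (φ : SchwartzMap (Fin n → ℝ) (Fin N → ℂ))
    (hsol : IsSolerSolution α β m ω f ⇑φ) :
    ∀ k, ∫ x, cInner (φ x) ((α k).mulVec (φ x)) = 0 := by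
  intro k
  have hφt : Function.HasTemperateGrowth (⇑φ) := schwartz_hasTemperateGrowth φ
  have hcoordt : Function.HasTemperateGrowth
      (⇑(ContinuousLinearMap.proj (R := ℝ) (φ := fun _ : Fin n => ℝ) k)) :=
    (ContinuousLinearMap.proj k : (Fin n → ℝ) →L[ℝ] ℝ).hasTemperateGrowth
  obtain ⟨q, hq⟩ : ∃ q : Fin n → SchwartzMap (Fin n → ℝ) ℂ,
      ∀ j, ⇑(q j) = fun y => cInner (φ y) ((α j).mulVec (φ y)) :=
    ⟨fun j => SchwartzMap.bilinLeftCLM (bilM (α j)) hφt φ, fun j => rfl⟩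
  obtain ⟨H, hH⟩ : ∃ H : Fin n → SchwartzMap (Fin n → ℝ) ℂ,
      ∀ j, ⇑(H j) = fun y => (y k) • q j y :=
    ⟨fun j => SchwartzMap.bilinLeftCLM
      ((ContinuousLinearMap.lsmul ℝ ℝ : ℝ →L[ℝ] ℂ →L[ℝ] ℂ).flip) hcoordt (q j), fun j => rfl⟩
  -- derivative computation
  have hder : ∀ j x, fderiv ℝ (⇑(H j)) x (Pi.single j 1)
      = ((Pi.single j 1 : Fin n → ℝ) k) • q j x
        + (x k) • (cInner (φ x) ((α j).mulVec (fderiv ℝ (⇑φ) x (Pi.single j 1)))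
                   + cInner (fderiv ℝ (⇑φ) x (Pi.single j 1)) ((α j).mulVec (φ x))) := by
    intro j x
    have hφd : HasFDerivAt (⇑φ) (fderiv ℝ (⇑φ) x) x := φ.differentiableAt.hasFDerivAt
    have hc : HasFDerivAt (fun y => bilM (α j) (φ y))
        ((bilM (α j)).comp (fderiv ℝ (⇑φ) x)) x :=
      ((bilM (α j)).hasFDerivAt).comp x hφd
    have hq' : HasFDerivAt (⇑(q j))
        (((bilM (α j)) (φ x)).comp (fderiv ℝ (⇑φ) x)
          + ((bilM (α j)).comp (fderiv ℝ (⇑φ) x)).flip (φ x)) x := by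
      rw [hq j]
      exact hc.clm_apply hφd
    have hcoord : HasFDerivAt (fun y : Fin n → ℝ => y k)
        ((ContinuousLinearMap.proj k : (Fin n → ℝ) →L[ℝ] ℝ)) x :=
      (ContinuousLinearMap.proj k : (Fin n → ℝ) →L[ℝ] ℝ).hasFDerivAt
    have hHd := hcoord.smul hq'
    have hfd := hHd.fderiv
    rw [hH j, show (fun y : Fin n → ℝ => y k • q j y) = (fun y : Fin n → ℝ => y k) • ⇑(q j) from rfl, hfd]
    simp only [ContinuousLinearMap.add_apply, ContinuousLinearMap.smul_apply,
      ContinuousLinearMap.comp_apply, ContinuousLinearMap.flip_apply,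
      ContinuousLinearMap.smulRight_apply, ContinuousLinearMap.proj_apply,
      bilM_apply]
    rw [show q j x = cInner (φ x) ((α j).mulVec (φ x)) from congrFun (hq j) x]
    module
  -- pointwise identity
  have hsum : ∀ x, ∑ j, fderiv ℝ (⇑(H j)) x (Pi.single j 1)
      = cInner (φ x) ((α k).mulVec (φ x)) := by
    intro x
    set S : Fin N → ℂ := ∑ j, (α j).mulVec (fderiv ℝ (⇑φ) x (Pi.single j 1)) with hSdef
    set b : ℂ := cInner (φ x) (β.mulVec (φ x)) with hbdef
    set fv : ℝ := f (b.re) with hfvdef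
    have heq := hsol x
    have h1 : (-Complex.I) • S = (ω:ℂ) • φ x - (m:ℂ) • β.mulVec (φ x)
        + (fv : ℂ) • β.mulVec (φ x) := by
      rw [heq]; module
    have hSval : S = Complex.I • ((ω:ℂ) • φ x - (m:ℂ) • β.mulVec (φ x)
        + (fv : ℂ) • β.mulVec (φ x)) := by
      calc S = Complex.I • ((-Complex.I) • S) := by
              rw [smul_smul]; simp
        _ = _ := by rw [h1]
    have hz : cInner (φ x) S = Complex.I * ((ω:ℂ) * cInner (φ x) (φ x) - (m:ℂ) * b + (fv:ℂ) * b) := by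
      rw [hSval, cInner_smul_right, cInner_add_right, cInner_sub_right,
        cInner_smul_right, cInner_smul_right, cInner_smul_right]
    have ha : (starRingEnd ℂ) (cInner (φ x) (φ x)) = cInner (φ x) (φ x) := cInner_conj _ _
    have hbc : (starRingEnd ℂ) b = b := by
      rw [hbdef, cInner_conj]
      exact (cInner_herm hβ _ _).symm
    have hcancel : cInner (φ x) S + (starRingEnd ℂ) (cInner (φ x) S) = 0 := by
      rw [hz]
      simp only [_root_.map_mul, _root_.map_add, _root_.map_sub, ha, hbc,
        Complex.conj_ofReal, Complex.conj_I]
      ring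
    have hsum2 : ∑ j, cInner (fderiv ℝ (⇑φ) x (Pi.single j 1)) ((α j).mulVec (φ x))
        = (starRingEnd ℂ) (cInner (φ x) S) := by
      rw [hSdef, cInner_sum_right, map_sum]
      refine Finset.sum_congr rfl fun j _ => ?_
      rw [cInner_conj]
      exact cInner_herm (hα j) _ _
    calc ∑ j, fderiv ℝ (⇑(H j)) x (Pi.single j 1)
        = ∑ j, (((Pi.single j 1 : Fin n → ℝ) k) • q j x
            + (x k) • (cInner (φ x) ((α j).mulVec (fderiv ℝ (⇑φ) x (Pi.single j 1)))
                   + cInner (fderiv ℝ (⇑φ) x (Pi.single j 1)) ((α j).mulVec (φ x)))) :=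
          Finset.sum_congr rfl fun j _ => hder j x
      _ = (∑ j, ((Pi.single j 1 : Fin n → ℝ) k) • q j x)
            + (x k) • ((∑ j, cInner (φ x) ((α j).mulVec (fderiv ℝ (⇑φ) x (Pi.single j 1))))
              + ∑ j, cInner (fderiv ℝ (⇑φ) x (Pi.single j 1)) ((α j).mulVec (φ x))) := by
          rw [Finset.sum_add_distrib, ← Finset.smul_sum, Finset.sum_add_distrib]
      _ = q k x + (x k) • (cInner (φ x) S + (starRingEnd ℂ) (cInner (φ x) S)) := by
          congr 1
          · have hsingle : ∀ j : Fin n, ((Pi.single j 1 : Fin n → ℝ) k) • q j x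
                = if k = j then q k x else 0 := by
              intro j
              rw [Pi.single_apply]
              by_cases hjk : k = j
              · subst hjk; simp
              · simp [hjk]
            rw [Finset.sum_congr rfl fun j _ => hsingle j, Finset.sum_ite_eq]
            simp
          · rw [hsum2, hSdef, cInner_sum_right]
      _ = cInner (φ x) ((α k).mulVec (φ x)) := by
          rw [hcancel, smul_zero, add_zero, show q k x = cInner (φ x) ((α k).mulVec (φ x)) from congrFun (hq k) x]
  -- final integration
  have hrw : (fun x => cInner (φ x) ((α k).mulVec (φ x)))
      = fun x => ∑ j, fderiv ℝ (⇑(H j)) x (Pi.single j 1) :=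
    funext fun x => (hsum x).symm
  rw [hrw]
  rw [integral_finset_sum Finset.univ (fun j _ => ?_)]
  · refine Finset.sum_eq_zero fun j _ => integral_pderiv_schwartz_eq_zero (H j) _
  · have : (fun x => fderiv ℝ (⇑(H j)) x (Pi.single j 1))
        = ⇑(LineDeriv.lineDerivOp (Pi.single j 1 : Fin n → ℝ) (H j) : SchwartzMap (Fin n → ℝ) ℂ) :=
      funext fun x => (SchwartzMap.lineDerivOp_apply_eq_fderiv (Pi.single j 1 : Fin n → ℝ) (H j) x).symm
    rw [this]
    exact (LineDeriv.lineDerivOp (Pi.single j 1 : Fin n → ℝ) (H j) : SchwartzMap (Fin n → ℝ) ℂ).integrable
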